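/- For a linear additive model f(x) = Σ_{i∈N} w_i u_i(x_i) with positive weights summing to 1 and each u_i attaining both 0 and 1, and for any instance x and any nested feature sets S ⊆ I ⊆ N with I nonempty, the Contextual Importance equals the ratio of weight sums: ω_{S,I}(x) = (Σ_{k∈S} w_k)/(Σ_{k∈I} w_k). In particular, ω_{S,I}(x) takes the same value for every instance x. -/

import Mathlib

set_option linter.unusedSectionVars false

open Finset

variable {N : Type*} [Fintype N] [DecidableEq N]
variable {X : N → Type*} [∀ i, Fintype (X i)] [∀ i, DecidableEq (X i)] [∀ i, Nonempty (X i)]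

/-- The instances that agree with `x` on every feature outside `S`. -/
def varies (x : ∀ i, X i) (S : Finset N) : Finset (∀ i, X i) :=
  Finset.univ.filter (fun y => ∀ j ∉ S, y j = x j)

theorem varies_nonempty (x : ∀ i, X i) (S : Finset N) : (varies x S).Nonempty :=
  ⟨x, by simp [varies]⟩

/-- `ymin_S(x)`: the minimum of `f` over all instances agreeing with `x` outside `S`. -/
noncomputable def ymin (f : (∀ i, X i) → ℝ) (x : ∀ i, X i) (S : Finset N) : ℝ :=
  (varies x S).inf' (varies_nonempty x S) f

/-- `ymax_S(x)`: the maximum of `f` over all instances agreeing with `x` outside `S`. -/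
noncomputable def ymax (f : (∀ i, X i) → ℝ) (x : ∀ i, X i) (S : Finset N) : ℝ :=
  (varies x S).sup' (varies_nonempty x S) f

/-- Contextual Importance `ω_{S,I}(x)`. -/
noncomputable def CI (f : (∀ i, X i) → ℝ) (x : ∀ i, X i) (S I : Finset N) : ℝ :=
  (ymax f x S - ymin f x S) / (ymax f x I - ymin f x I)

/-- Contextual Utility `CU_S(x)`. -/
noncomputable def CU (f : (∀ i, X i) → ℝ) (x : ∀ i, X i) (S : Finset N) : ℝ :=
  (f x - ymin f x S) / (ymax f x S - ymin f x S)

/-- Contextual influence `φ_{S,I}(x) = ω_{S,I}(x)·(CU_S(x) − φ₀)`. -/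
noncomputable def Cinfl (f : (∀ i, X i) → ℝ) (x : ∀ i, X i) (S I : Finset N) (φ₀ : ℝ) : ℝ :=
  CI f x S I * (CU f x S - φ₀)

/-! On the instances agreeing with `x` outside `S`, an additively separable model
`f y = ∑ i, g i (y i)` is maximised (minimised) by choosing each coordinate in `S` independently to
maximise (minimise) `g i`, so its spread is `∑ i ∈ S, (max g i - min g i)`. For a linear additive
model these extremes are `w i` and `0`, so the spread over `S` is `∑ k ∈ S, w k` for every `x`. -/

theorem mem_varies_iff {x y : ∀ i, X i} {S : Finset N} :
    y ∈ varies x S ↔ ∀ j ∉ S, y j = x j := by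
  simp [varies]

theorem piecewise_mem_varies (x z : ∀ i, X i) (S : Finset N) : S.piecewise z x ∈ varies x S :=
  mem_varies_iff.2 fun _ hj => S.piecewise_eq_of_notMem z x hj

section Additive

variable {f : (∀ i, X i) → ℝ} {g : ∀ i, X i → ℝ}

theorem additive_eq_on_varies (hf : ∀ y, f y = ∑ i, g i (y i)) {x y : ∀ i, X i} {S : Finset N}
    (hy : y ∈ varies x S) :
    f y = ∑ i ∈ S, g i (y i) + ∑ i ∈ Sᶜ, g i (x i) := by
  rw [hf, ← S.sum_add_sum_compl]
  congr 1
  exact Finset.sum_congr rfl fun i hi => by rw [mem_varies_iff.1 hy i (Finset.mem_compl.1 hi)]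

theorem exists_mem_varies_additive_eq (hf : ∀ y, f y = ∑ i, g i (y i)) {c : N → ℝ}
    (hc : ∀ i, ∃ t, g i t = c i) (x : ∀ i, X i) (S : Finset N) :
    ∃ y ∈ varies x S, f y = ∑ i ∈ S, c i + ∑ i ∈ Sᶜ, g i (x i) := by
  choose z hz using hc
  refine ⟨S.piecewise z x, piecewise_mem_varies x z S, ?_⟩
  rw [additive_eq_on_varies hf (piecewise_mem_varies x z S)]
  congr 1
  exact Finset.sum_congr rfl fun i hi => by rw [S.piecewise_eq_of_mem z x hi, hz]

theorem ymax_additive (hf : ∀ y, f y = ∑ i, g i (y i)) {M : N → ℝ}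
    (hle : ∀ i t, g i t ≤ M i) (hM : ∀ i, ∃ t, g i t = M i) (x : ∀ i, X i) (S : Finset N) :
    ymax f x S = ∑ i ∈ S, M i + ∑ i ∈ Sᶜ, g i (x i) := by
  obtain ⟨y₀, hy₀, hfy₀⟩ := exists_mem_varies_additive_eq hf hM x S
  refine le_antisymm (Finset.sup'_le _ _ fun y hy => ?_) (hfy₀ ▸ Finset.le_sup' f hy₀)
  rw [additive_eq_on_varies hf hy]
  gcongr with i
  exact hle i (y i)

theorem ymin_additive (hf : ∀ y, f y = ∑ i, g i (y i)) {m : N → ℝ}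
    (hle : ∀ i t, m i ≤ g i t) (hm : ∀ i, ∃ t, g i t = m i) (x : ∀ i, X i) (S : Finset N) :
    ymin f x S = ∑ i ∈ S, m i + ∑ i ∈ Sᶜ, g i (x i) := by
  obtain ⟨y₀, hy₀, hfy₀⟩ := exists_mem_varies_additive_eq hf hm x S
  refine le_antisymm (hfy₀ ▸ Finset.inf'_le f hy₀) (Finset.le_inf' _ _ fun y hy => ?_)
  rw [additive_eq_on_varies hf hy]
  gcongr with i
  exact hle i (y i)

theorem ymax_sub_ymin_additive (hf : ∀ y, f y = ∑ i, g i (y i)) {m M : N → ℝ}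
    (hm_le : ∀ i t, m i ≤ g i t) (hm : ∀ i, ∃ t, g i t = m i)
    (hle_M : ∀ i t, g i t ≤ M i) (hM : ∀ i, ∃ t, g i t = M i) (x : ∀ i, X i) (S : Finset N) :
    ymax f x S - ymin f x S = ∑ i ∈ S, (M i - m i) := by
  rw [ymax_additive hf hle_M hM, ymin_additive hf hm_le hm, Finset.sum_sub_distrib]
  ring

end Additive

theorem ymax_sub_ymin_linear {w : N → ℝ} {u : ∀ i, X i → ℝ} {f : (∀ i, X i) → ℝ}
    (hw : ∀ i, 0 ≤ w i) (hu01 : ∀ i t, u i t ∈ Set.Icc (0 : ℝ) 1)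
    (hu0 : ∀ i, ∃ t, u i t = 0) (hu1 : ∀ i, ∃ t, u i t = 1)
    (hf : ∀ y, f y = ∑ i, w i * u i (y i)) (x : ∀ i, X i) (S : Finset N) :
    ymax f x S - ymin f x S = ∑ k ∈ S, w k := by
  have hmin : ∀ i, ∃ t, w i * u i t = 0 := fun i =>
    (hu0 i).imp fun _ ht => by rw [ht, mul_zero]
  have hmax : ∀ i, ∃ t, w i * u i t = w i := fun i =>
    (hu1 i).imp fun _ ht => by rw [ht, mul_one]
  rw [ymax_sub_ymin_additive hf (fun i t => mul_nonneg (hw i) (hu01 i t).1) hmin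
    (fun i t => mul_le_of_le_one_right (hw i) (hu01 i t).2) hmax]
  simp only [sub_zero]

theorem CI_eq_weight_ratio_general
    (w : N → ℝ) (u : ∀ i, X i → ℝ) (f : (∀ i, X i) → ℝ)
    (hw : ∀ i, 0 < w i)
    (hu01 : ∀ i t, u i t ∈ Set.Icc (0 : ℝ) 1)
    (hu0 : ∀ i, ∃ t, u i t = 0) (hu1 : ∀ i, ∃ t, u i t = 1)
    (hf : ∀ y, f y = ∑ i, w i * u i (y i))
    (S I : Finset N) :
    (∀ x : ∀ i, X i, CI f x S I = (∑ k ∈ S, w k) / (∑ k ∈ I, w k)) ∧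
    (∀ x x' : ∀ i, X i, CI f x S I = CI f x' S I) := by
  have hspread := ymax_sub_ymin_linear (fun i => (hw i).le) hu01 hu0 hu1 hf
  have hCI : ∀ x : ∀ i, X i, CI f x S I = (∑ k ∈ S, w k) / (∑ k ∈ I, w k) := fun x => by
    rw [CI, hspread, hspread]
  exact ⟨hCI, fun x x' => by rw [hCI x, hCI x']⟩

/-- For a linear additive model, the Contextual Importance equals the ratio of weight
sums, independently of the instance. -/
theorem CI_eq_weight_ratio
    (w : N → ℝ) (u : ∀ i, X i → ℝ) (f : (∀ i, X i) → ℝ)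
    (hw : ∀ i, 0 < w i) (hwsum : ∑ i, w i = 1)
    (hu01 : ∀ i t, u i t ∈ Set.Icc (0 : ℝ) 1)
    (hu0 : ∀ i, ∃ t, u i t = 0) (hu1 : ∀ i, ∃ t, u i t = 1)
    (hf : ∀ y, f y = ∑ i, w i * u i (y i))
    (S I : Finset N) (hSI : S ⊆ I) (hI : I.Nonempty) :
    (∀ x : ∀ i, X i, CI f x S I = (∑ k ∈ S, w k) / (∑ k ∈ I, w k)) ∧
    (∀ x x' : ∀ i, X i, CI f x S I = CI f x' S I) :=
  CI_eq_weight_ratio_general w u f hw hu01 hu0 hu1 hf S I
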